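/- Let I be a finite set, let s ∉ I, let T^α : I → ℝ, and let y : (I ∪ {s}) × (I ∪ {s}) → {0,1} be such that for every i ∈ I, ∑_{j ∈ I ∪ {s}} y(i,j) = 1 and ∑_{j ∈ I ∪ {s}} y(j,i) = 1, and such that y(i,j) = 1 with i, j ∈ I implies T^α(i) < T^α(j). Define σ : I ∪ {s} → I ∪ {s} by σ(s) = s and, for i ∈ I, σ(i) = the unique j with y(i,j) = 1. Then for every i ∈ I there exists a natural number k with 1 ≤ k ≤ |I| such that σ^k(i) = s. -/

import Mathlib

/-!
Start times strictly increase along a run, so each step that stays among the trips strictly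
shrinks the set of trips starting no earlier than the current one; a run from `i` therefore
reaches the garage within as many steps as there are trips starting no earlier than `i`.
-/

open Finset

namespace Finset

variable {V β : Type*} [Preorder β] [DecidableLE β]

theorem filter_apply_le_ssubset_of_lt {I : Finset V} {f : V → β} {a b : V} (ha : a ∈ I)
    (hab : f a < f b) : {j ∈ I | f b ≤ f j} ⊂ {j ∈ I | f a ≤ f j} :=
  (ssubset_iff_of_subset (monotone_filter_right I fun _ _ => hab.le.trans)).2
    ⟨a, mem_filter.2 ⟨ha, le_rfl⟩, fun h => (mem_filter.1 h).2.not_gt hab⟩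

theorem exists_iterate_eq_of_lt_apply {I : Finset V} {s : V} {σ : V → V} {f : V → β}
    (hstep : ∀ i ∈ I, σ i = s ∨ σ i ∈ I ∧ f i < f (σ i)) (i : V) (hi : i ∈ I) :
    ∃ k, 1 ≤ k ∧ k ≤ #{j ∈ I | f i ≤ f j} ∧ σ^[k] i = s := by
  rcases hstep i hi with hs | ⟨hσi, hlt⟩
  · exact ⟨1, le_rfl, card_pos.2 ⟨i, mem_filter.2 ⟨hi, le_rfl⟩⟩, hs⟩
  · have hcard := card_lt_card (filter_apply_le_ssubset_of_lt hi hlt)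
    obtain ⟨k, -, hk, hks⟩ := exists_iterate_eq_of_lt_apply hstep (σ i) hσi
    exact ⟨k + 1, Nat.le_add_left 1 k, by omega, hks⟩
termination_by #{j ∈ I | f i ≤ f j}
decreasing_by exact card_lt_card (filter_apply_le_ssubset_of_lt hi hlt)

end Finset

theorem runs_terminate_at_garage_general {V : Type*} [DecidableEq V] (I : Finset V) (s : V)
    (Tα : V → ℝ) (y : V → V → ℝ)
    (hmono : ∀ i ∈ I, ∀ j ∈ I, y i j = 1 → Tα i < Tα j)
    (σ : V → V)
    (hσ : ∀ i ∈ I, σ i ∈ insert s I ∧ y i (σ i) = 1) :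
    ∀ i ∈ I, ∃ k : ℕ, 1 ≤ k ∧ k ≤ I.card ∧ σ^[k] i = s := by
  have hstep : ∀ i ∈ I, σ i = s ∨ σ i ∈ I ∧ Tα i < Tα (σ i) := fun i hi =>
    (mem_insert.1 (hσ i hi).1).imp_right fun hσi => ⟨hσi, hmono i hi _ hσi (hσ i hi).2⟩
  intro i hi
  obtain ⟨k, hk1, hk, hks⟩ := exists_iterate_eq_of_lt_apply hstep i hi
  exact ⟨k, hk1, hk.trans (card_filter_le _ _), hks⟩

/-- Let `I` be a finite set of trips, `s ∉ I` the garage, `T^α` the start times,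
and `y : (I ∪ {s}) × (I ∪ {s}) → {0,1}` satisfy the degree constraints, with
start times strictly increasing along arcs between trips. If `σ` is the
successor map (`σ s = s`, and for `i ∈ I`, `σ i` is the unique `j ∈ I ∪ {s}`
with `y(i,j) = 1`), then every trip reaches the garage: for all `i ∈ I` there
is `k` with `1 ≤ k ≤ |I|` and `σ^k(i) = s`. -/
theorem runs_terminate_at_garage {V : Type*} [DecidableEq V] (I : Finset V) (s : V)
    (hs : s ∉ I) (Tα : V → ℝ) (y : V → V → ℝ)
    (hbin : ∀ i ∈ insert s I, ∀ j ∈ insert s I, y i j = 0 ∨ y i j = 1)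
    (hout : ∀ i ∈ I, ∑ j ∈ insert s I, y i j = 1)
    (hin : ∀ i ∈ I, ∑ j ∈ insert s I, y j i = 1)
    (hmono : ∀ i ∈ I, ∀ j ∈ I, y i j = 1 → Tα i < Tα j)
    (σ : V → V) (hσs : σ s = s)
    (hσ : ∀ i ∈ I, σ i ∈ insert s I ∧ y i (σ i) = 1) :
    ∀ i ∈ I, ∃ k : ℕ, 1 ≤ k ∧ k ≤ I.card ∧ σ^[k] i = s :=
  runs_terminate_at_garage_general I s Tα y hmono σ hσ
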